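/- Let R^Q be the n×n matrix whose l-th column is q_{0,l} for l = 0, …, n−1, and let D^Q := (R^Q)ᵀ R (R^Q)* (where * denotes entrywise complex conjugation). Then D^Q is a diagonal matrix with strictly positive real diagonal entries, and R⁻¹ = (R^Q)* (D^Q)⁻¹ (R^Q)ᵀ. -/

import Mathlib

open Matrix
open scoped ComplexOrder

noncomputable section

/-- The `k`-th standard basis vector of `ℂⁿ` (zero if `k ≥ n`). -/
def eVec (n : ℕ) (k : ℕ) : Fin n → ℂ := fun j => if (j : ℕ) = k then 1 else 0

/-- `vᵀ R w`. -/
def bform {n : ℕ} (R : Matrix (Fin n) (Fin n) ℂ) (v w : Fin n → ℂ) : ℂ :=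
  v ⬝ᵥ R.mulVec w

/-- Joint recursion computing the pair `(p_{k,k+d}, q_{k,k+d})`. -/
def pqAux {n : ℕ} (R : Matrix (Fin n) (Fin n) ℂ) : ℕ → ℕ → (Fin n → ℂ) × (Fin n → ℂ)
  | 0, k => (eVec n k, eVec n k)
  | d + 1, k =>
      let p := (pqAux R d k).1
      let q := (pqAux R d (k + 1)).2
      let l := k + d + 1
      let a := bform R p (eVec n l) / bform R q (eVec n l)
      let a' := bform R q (eVec n k) / bform R p (eVec n k)
      (p - a • q, q - a' • p)

/-- The orthogonal polynomial `p_{k,l}`. -/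
def pVec {n : ℕ} (R : Matrix (Fin n) (Fin n) ℂ) (k l : ℕ) : Fin n → ℂ :=
  (pqAux R (l - k) k).1

/-- The orthogonal polynomial `q_{k,l}`. -/
def qVec {n : ℕ} (R : Matrix (Fin n) (Fin n) ℂ) (k l : ℕ) : Fin n → ℂ :=
  (pqAux R (l - k) k).2

/-- The generalized reflection coefficient `a_{k,l}`. -/
def aCoef {n : ℕ} (R : Matrix (Fin n) (Fin n) ℂ) (k l : ℕ) : ℂ :=
  bform R (pVec R k (l - 1)) (eVec n l) / bform R (qVec R (k + 1) l) (eVec n l)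

/-- The generalized reflection coefficient `a'_{k,l}`. -/
def aCoef' {n : ℕ} (R : Matrix (Fin n) (Fin n) ℂ) (k l : ℕ) : ℂ :=
  bform R (qVec R (k + 1) l) (eVec n k) / bform R (pVec R k (l - 1)) (eVec n k)

/-- `v_{k,l} = q_{k,l}ᵀ R e_l`. -/
def vSc {n : ℕ} (R : Matrix (Fin n) (Fin n) ℂ) (k l : ℕ) : ℂ :=
  bform R (qVec R k l) (eVec n l)

/-- `v'_{k,l} = p_{k,l}ᵀ R e_k`. -/
def vSc' {n : ℕ} (R : Matrix (Fin n) (Fin n) ℂ) (k l : ℕ) : ℂ :=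
  bform R (pVec R k l) (eVec n k)

namespace Stmt7Aux

variable {n : ℕ} (R : Matrix (Fin n) (Fin n) ℂ)

lemma bform_sub_smul (v w u : Fin n → ℂ) (a : ℂ) :
    bform R (v - a • w) u = bform R v u - a * bform R w u := by
  simp [bform, sub_dotProduct, smul_dotProduct, smul_eq_mul]

lemma bform_eVec (v : Fin n → ℂ) (j : Fin n) :
    bform R v (eVec n (j : ℕ)) = ∑ i, v i * R i j := by
  simp [bform, dotProduct, mulVec, eVec, Fin.val_eq_val, mul_ite, Finset.sum_ite_eq']

lemma bform_star (v w : Fin n → ℂ) :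
    bform R v (star w) = ∑ j, (starRingEnd ℂ) (w j) * bform R v (eVec n (j : ℕ)) := by
  simp only [bform, dotProduct, mulVec, Pi.star_apply, Finset.mul_sum, Finset.sum_mul]
  rw [Finset.sum_comm]
  apply Finset.sum_congr rfl; intro j _; apply Finset.sum_congr rfl; intro i _
  simp [eVec, Complex.star_def, Fin.val_eq_val, mul_ite, Finset.sum_ite_eq']
  ring

lemma bform_star_self_pos (hR : R.PosDef) (v : Fin n → ℂ) (hv : v ≠ 0) :
    0 < bform R v (star v) := by
  have := hR.dotProduct_mulVec_pos (x := star v) (by simpa using hv)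
  simpa [bform] using this

lemma bform_star_comm (hH : R.IsHermitian) (v w : Fin n → ℂ) :
    (starRingEnd ℂ) (bform R v (star w)) = bform R w (star v) := by
  have hc : ∀ i j, (starRingEnd ℂ) (R i j) = R j i := fun i j => by
    conv_rhs => rw [← hH]
    simp [conjTranspose_apply]
  simp only [bform, dotProduct, mulVec, Pi.star_apply, map_sum, Complex.star_def,
    Finset.mul_sum]
  rw [Finset.sum_comm]
  apply Finset.sum_congr rfl; intro j _; apply Finset.sum_congr rfl; intro i _
  rw [_root_.map_mul, _root_.map_mul, Complex.conj_conj, hc]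
  ring

lemma pivot_pos (hR : R.PosDef) (v : Fin n → ℂ) (l : ℕ) (hl : l < n)
    (hv1 : ∀ j : Fin n, (j : ℕ) = l → v j = 1)
    (h0 : ∀ j : Fin n, (j : ℕ) ≠ l → v j = 0 ∨ bform R v (eVec n (j : ℕ)) = 0) :
    0 < bform R v (eVec n l) := by
  have hvne : v ≠ 0 := by
    intro h
    have h1 := hv1 ⟨l, hl⟩ rfl
    rw [h] at h1; simp at h1
  have hpos := bform_star_self_pos R hR v hvne
  rw [bform_star] at hpos
  have heq : ∑ j, (starRingEnd ℂ) (v j) * bform R v (eVec n (j : ℕ))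
      = bform R v (eVec n l) := by
    rw [Finset.sum_eq_single (⟨l, hl⟩ : Fin n)]
    · rw [hv1 ⟨l, hl⟩ rfl]; simp
    · intro j _ hj
      have hjl : (j : ℕ) ≠ l := fun h => hj (Fin.ext h)
      rcases h0 j hjl with h | h <;> simp [h]
    · simp
  rwa [heq] at hpos

lemma key (hR : R.PosDef) : ∀ d k : ℕ, k + d < n →
    ((∀ j : Fin n, ((j : ℕ) < k ∨ k + d < (j : ℕ)) → (pqAux R d k).1 j = 0) ∧
     (∀ j : Fin n, (j : ℕ) = k → (pqAux R d k).1 j = 1) ∧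
     (∀ j : Fin n, k < (j : ℕ) → (j : ℕ) ≤ k + d →
        bform R (pqAux R d k).1 (eVec n (j : ℕ)) = 0)) ∧
    ((∀ j : Fin n, ((j : ℕ) < k ∨ k + d < (j : ℕ)) → (pqAux R d k).2 j = 0) ∧
     (∀ j : Fin n, (j : ℕ) = k + d → (pqAux R d k).2 j = 1) ∧
     (∀ j : Fin n, k ≤ (j : ℕ) → (j : ℕ) < k + d →
        bform R (pqAux R d k).2 (eVec n (j : ℕ)) = 0)) := by
  intro d
  induction d with
  | zero =>
    intro k hk
    refine ⟨⟨fun j hj => ?_, fun j hj => ?_, fun j h1 h2 => by omega⟩,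
            fun j hj => ?_, fun j hj => ?_, fun j h1 h2 => by omega⟩ <;>
      simp [pqAux, eVec] <;> omega
  | succ d ih =>
    intro k hk
    obtain ⟨⟨hp0s, hp0v, hp0o⟩, -⟩ := ih k (by omega)
    obtain ⟨-, hq1s, hq1v, hq1o⟩ := ih (k + 1) (by omega)
    set p := (pqAux R d k).1 with hp
    set q := (pqAux R d (k + 1)).2 with hq
    have hl : k + d + 1 < n := by omega
    -- positivity of denominators
    have hDq : 0 < bform R q (eVec n (k + d + 1)) := by
      apply pivot_pos R hR q (k + d + 1) hl
      · intro j hj; exact hq1v j (by omega)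
      · intro j hj
        by_cases hcase : (j : ℕ) < k + 1 ∨ (k + 1) + d < (j : ℕ)
        · exact Or.inl (hq1s j hcase)
        · exact Or.inr (hq1o j (by omega) (by omega))
    have hDp : 0 < bform R p (eVec n k) := by
      apply pivot_pos R hR p k (by omega)
      · intro j hj; exact hp0v j hj
      · intro j hj
        by_cases hcase : (j : ℕ) < k ∨ k + d < (j : ℕ)
        · exact Or.inl (hp0s j hcase)
        · exact Or.inr (hp0o j (by omega) (by omega))
    have hpq : pqAux R (d + 1) k =
        (p - (bform R p (eVec n (k + d + 1)) / bform R q (eVec n (k + d + 1))) • q,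
         q - (bform R q (eVec n k) / bform R p (eVec n k)) • p) := rfl
    rw [hpq]
    set a := bform R p (eVec n (k + d + 1)) / bform R q (eVec n (k + d + 1)) with ha
    set a' := bform R q (eVec n k) / bform R p (eVec n k) with ha'
    refine ⟨⟨?_, ?_, ?_⟩, ?_, ?_, ?_⟩
    · intro j hj
      have h1 : p j = 0 := hp0s j (by omega)
      have h2 : q j = 0 := hq1s j (by omega)
      simp [h1, h2]
    · intro j hj
      have h1 : p j = 1 := hp0v j hj
      have h2 : q j = 0 := hq1s j (by omega)
      simp [h1, h2]
    · intro j h1 h2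
      rw [bform_sub_smul]
      rcases Nat.lt_or_ge (j : ℕ) (k + d + 1) with hcase | hcase
      · rw [hp0o j (by omega) (by omega), hq1o j (by omega) (by omega)]
        ring
      · have hje : (j : ℕ) = k + d + 1 := by omega
        rw [hje, ha, div_mul_cancel₀ _ hDq.ne']
        ring
    · intro j hj
      have h1 : q j = 0 := hq1s j (by omega)
      have h2 : p j = 0 := hp0s j (by omega)
      simp [h1, h2]
    · intro j hj
      have h1 : q j = 1 := hq1v j (by omega)
      have h2 : p j = 0 := hp0s j (by omega)
      simp [h1, h2]
    · intro j h1 h2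
      rw [bform_sub_smul]
      rcases Nat.eq_or_lt_of_le h1 with hcase | hcase
      · rw [← hcase, ha', div_mul_cancel₀ _ hDp.ne']
        ring
      · rw [hq1o j (by omega) (by omega), hp0o j (by omega) (by omega)]
        ring

end Stmt7Aux

/-- Cholesky-type factorization of `R⁻¹` from the `q` polynomials:
with `R^Q = [q_{0,0}, …, q_{0,n-1}]` and `D^Q = (R^Q)ᵀ R (R^Q)*`, the matrix `D^Q` is
diagonal with strictly positive (real) diagonal entries, and
`R⁻¹ = (R^Q)* (D^Q)⁻¹ (R^Q)ᵀ`. -/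
theorem stmt7 (n : ℕ) (hn : 1 ≤ n) (R : Matrix (Fin n) (Fin n) ℂ) (hR : R.PosDef) :
    let RQ : Matrix (Fin n) (Fin n) ℂ := Matrix.of fun i l => qVec R 0 (l : ℕ) i
    let DQ : Matrix (Fin n) (Fin n) ℂ := RQᵀ * R * RQ.map (starRingEnd ℂ)
    DQ.IsDiag ∧ (∀ i : Fin n, 0 < DQ i i) ∧
      R⁻¹ = RQ.map (starRingEnd ℂ) * DQ⁻¹ * RQᵀ := by
  intro RQ DQ
  open Stmt7Aux in
  -- properties of the columns
  have hq : ∀ l : Fin n,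
      (∀ j : Fin n, (l : ℕ) < (j : ℕ) → RQ j l = 0) ∧
      (∀ j : Fin n, (j : ℕ) = (l : ℕ) → RQ j l = 1) ∧
      (∀ j : Fin n, (j : ℕ) < (l : ℕ) → bform R (fun i => RQ i l) (eVec n (j : ℕ)) = 0) := by
    intro l
    obtain ⟨-, hs, hv, ho⟩ := key R hR (l : ℕ) 0 (by simpa using l.isLt)
    have hcol : (fun i => RQ i l) = (pqAux R (l : ℕ) 0).2 := by
      funext i; simp [RQ, qVec]
    refine ⟨fun j hj => ?_, fun j hj => ?_, fun j hj => ?_⟩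
    · have := hs j (Or.inr (by omega))
      simpa [RQ, qVec] using this
    · have := hv j (by omega)
      simpa [RQ, qVec] using this
    · rw [hcol]; exact ho j (by omega) (by omega)
  have hDQ : ∀ l m : Fin n, DQ l m = bform R (fun i => RQ i l) (star fun i => RQ i m) := by
    intro l m
    simp only [DQ, Matrix.mul_apply, bform, dotProduct, mulVec, Pi.star_apply,
      transpose_apply, map_apply, Finset.sum_mul, Finset.mul_sum]
    rw [Finset.sum_comm]
    apply Finset.sum_congr rfl; intro j _; apply Finset.sum_congr rfl; intro i _
    simp [Complex.star_def]; ring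
  -- lower entries vanish
  have hlow : ∀ l m : Fin n, (m : ℕ) < (l : ℕ) → DQ l m = 0 := by
    intro l m hml
    rw [hDQ, bform_star]
    apply Finset.sum_eq_zero
    intro j _
    rcases Nat.lt_or_ge (j : ℕ) (l : ℕ) with hj | hj
    · rw [(hq l).2.2 j hj]; ring
    · rw [(hq m).1 j (by omega)]; simp
  have hdiag : DQ.IsDiag := by
    intro l m hlm
    rcases Nat.lt_or_ge (m : ℕ) (l : ℕ) with h | h
    · exact hlow l m h
    · have hml : (l : ℕ) < (m : ℕ) := by
        rcases Nat.eq_or_lt_of_le h with h' | h'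
        · exact absurd (Fin.ext h') hlm
        · exact h'
      have := bform_star_comm R hR.isHermitian (fun i => RQ i m) (fun i => RQ i l)
      rw [← hDQ, ← hDQ] at this
      rw [← this, hlow m l hml]
      simp
  have hqne : ∀ l : Fin n, (fun i => RQ i l) ≠ 0 := by
    intro l h
    have h1 := (hq l).2.1 l rfl
    rw [congrFun h l] at h1
    simp at h1
  have hpos : ∀ i : Fin n, 0 < DQ i i := by
    intro i
    rw [hDQ]
    exact bform_star_self_pos R hR _ (hqne i)
  refine ⟨hdiag, hpos, ?_⟩
  -- determinants
  have hRQdet : RQ.det = 1 := by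
    have htri : RQ.BlockTriangular id := by
      intro i j hij
      exact (hq j).1 i hij
    rw [Matrix.det_of_upperTriangular htri]
    have : ∀ i : Fin n, RQ i i = 1 := fun i => (hq i).2.1 i rfl
    simp [this]
  have hT : IsUnit RQᵀ.det := by rw [Matrix.det_transpose, hRQdet]; exact isUnit_one
  have hA : IsUnit (RQ.map (starRingEnd ℂ)).det := by
    have : (starRingEnd ℂ) RQ.det = (RQ.map (starRingEnd ℂ)).det :=
      RingHom.map_det (starRingEnd ℂ) RQ
    rw [← this, hRQdet]
    simp
  have hRdet : IsUnit R.det := hR.det_pos.ne'.isUnit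
  have hone : R * (RQ.map (starRingEnd ℂ) * DQ⁻¹ * RQᵀ) = 1 := by
    have hDQfact : DQ = RQᵀ * R * RQ.map (starRingEnd ℂ) := rfl
    rw [hDQfact, Matrix.mul_inv_rev, Matrix.mul_inv_rev]
    simp only [Matrix.mul_assoc]
    rw [Matrix.nonsing_inv_mul _ hT, Matrix.mul_one,
      Matrix.mul_nonsing_inv_cancel_left _ _ hA, Matrix.mul_nonsing_inv _ hRdet]
  exact Matrix.inv_eq_right_inv hone
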